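/- arXiv:1612.06772 — 2 statements merged into one kernel-verified Lean document; each statement's English description precedes it below -/
import Mathlib

section
/- For f in the Schwartz space on ℝⁿ, u ∈ ℝⁿ, and -1 < k < n - 1, the extension g(x) = |x|^{-(k+1)} D_u^k f(x/|x|) of the weighted divergent beam transform is locally integrable on ℝⁿ. -/
/-!
A Schwartz function decays faster than any power along every ray from `u`, uniformly in the
direction, and `ρ ^ k` is integrable at `0` because `k > -1`; hence `D_u^k f` is bounded on the
unit sphere. So `|g x| ≤ B * ‖x‖ ^ (-(k + 1))`, which is locally integrable because `k + 1 < n`.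
-/

open MeasureTheory Real Set Metric
open scoped RealInnerProductSpace

noncomputable section

abbrev E (n : ℕ) := EuclideanSpace ℝ (Fin n)

open Asymptotics Filter Topology

theorem integrableOn_rpow_mul_one_add_rpow_neg {k m : ℝ} (hk : -1 < k) (hkm : k + 1 < m) :
    IntegrableOn (fun ρ : ℝ => ρ ^ k * (1 + ρ) ^ (-m)) (Ioi 0) := by
  have hcont : ContinuousOn (fun ρ : ℝ => (1 + ρ) ^ (-m)) (Ioi 0) := fun ρ (hρ : 0 < ρ) =>
    ((continuous_const.add continuous_id).continuousAt.rpow_const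
      (Or.inl (show (1 : ℝ) + ρ ≠ 0 by linarith))).continuousWithinAt
  have hbigO_atTop : (fun ρ : ℝ => (1 + ρ) ^ (-m)) =O[atTop] (· ^ (-m)) := by
    refine IsBigO.of_bound 1 ?_
    filter_upwards [eventually_gt_atTop 0] with ρ hρ
    rw [norm_of_nonneg (by positivity), norm_of_nonneg (by positivity), one_mul]
    exact rpow_le_rpow_of_nonpos hρ (by linarith) (by linarith)
  have hbigO_zero : (fun ρ : ℝ => (1 + ρ) ^ (-m)) =O[𝓝[>] 0] (· ^ (-(0 : ℝ))) := by
    refine IsBigO.of_bound 1 ?_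
    filter_upwards [self_mem_nhdsWithin] with ρ (hρ : 0 < ρ)
    rw [norm_of_nonneg (by positivity), neg_zero, rpow_zero, norm_one, one_mul]
    exact rpow_le_one_of_one_le_of_nonpos (by linarith) (by linarith)
  simpa using mellin_convergent_of_isBigO_scalar (s := k + 1)
    (hcont.locallyIntegrableOn measurableSet_Ioi) hbigO_atTop hkm hbigO_zero (by linarith)

section Beam

variable {V : Type*} [NormedAddCommGroup V] [NormedSpace ℝ V]

/-- The weighted divergent beam transform `D_u^k f`. -/
def divergentBeam (f : V → ℝ) (u : V) (k : ℝ) (σ : V) : ℝ :=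
  ∫ ρ in Ioi (0 : ℝ), f (u + ρ • σ) * ρ ^ k

theorem SchwartzMap.exists_norm_add_le_one_add_norm_rpow (f : SchwartzMap V ℝ) (u : V) (m : ℕ) :
    ∃ C, ∀ y, ‖f (u + y)‖ ≤ C * (1 + ‖y‖) ^ (-(m : ℝ)) := by
  set g := f.compSubConstCLM ℝ (-u)
  refine ⟨2 ^ m * (Finset.Iic (m, 0)).sup (fun p => SchwartzMap.seminorm ℝ p.1 p.2) g,
    fun y => ?_⟩
  have hdecay := one_add_le_sup_seminorm_apply (𝕜 := ℝ) (m := (m, 0)) le_rfl le_rfl g y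
  rw [norm_iteratedFDeriv_zero, compSubConstCLM_apply, sub_neg_eq_add, add_comm y] at hdecay
  rw [rpow_neg (by positivity), ← div_eq_mul_inv, le_div_iff₀ (by positivity), rpow_natCast,
    mul_comm]
  exact hdecay

theorem SchwartzMap.exists_norm_divergentBeam_le (f : SchwartzMap V ℝ) (u : V) {k : ℝ}
    (hk : -1 < k) : ∃ B, ∀ σ : V, ‖σ‖ = 1 → ‖divergentBeam f u k σ‖ ≤ B := by
  obtain ⟨m, hm⟩ := exists_nat_gt (k + 1)
  obtain ⟨C, hC⟩ := f.exists_norm_add_le_one_add_norm_rpow u m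
  refine ⟨∫ ρ in Ioi (0 : ℝ), C * (ρ ^ k * (1 + ρ) ^ (-(m : ℝ))), fun σ hσ => ?_⟩
  refine norm_integral_le_of_norm_le
    ((integrableOn_rpow_mul_one_add_rpow_neg hk hm).const_mul C) ?_
  filter_upwards [ae_restrict_mem measurableSet_Ioi] with ρ (hρ : 0 < ρ)
  have hnorm : ‖ρ • σ‖ = ρ := by rw [norm_smul, hσ, mul_one, norm_of_nonneg hρ.le]
  calc ‖f (u + ρ • σ) * ρ ^ k‖ = ‖f (u + ρ • σ)‖ * ρ ^ k := by
        rw [norm_mul, norm_of_nonneg (rpow_nonneg hρ.le k)]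
    _ ≤ C * (1 + ρ) ^ (-(m : ℝ)) * ρ ^ k := by
        gcongr
        simpa [hnorm] using hC (ρ • σ)
    _ = C * (ρ ^ k * (1 + ρ) ^ (-(m : ℝ))) := by ring

theorem SchwartzMap.stronglyMeasurable_divergentBeam_normalize [MeasurableSpace V] [BorelSpace V]
    (f : SchwartzMap V ℝ) (u : V) (k : ℝ) :
    StronglyMeasurable fun x : V => divergentBeam f u k (‖x‖⁻¹ • x) :=
  StronglyMeasurable.integral_prod_right'
    (f := fun p : V × ℝ => f (u + p.2 • (‖p.1‖⁻¹ • p.1)) * p.2 ^ k)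
    (Measurable.stronglyMeasurable (by fun_prop))

end Beam

/-- Local integrability of the homogeneous extension of the weighted divergent
beam transform, for -1 < k < n - 1. -/
theorem stmt2 (n : ℕ) (f : SchwartzMap (E n) ℝ) (u : E n) (k : ℝ)
    (hk : -1 < k) (hk' : k < (n : ℝ) - 1) :
    LocallyIntegrable
      (fun x : E n => ‖x‖ ^ (-(k + 1)) * ∫ ρ in Ioi (0 : ℝ), f (u + ρ • (‖x‖⁻¹ • x)) * ρ ^ k)
      volume := by
  have hdim : k + 1 < Module.finrank ℝ (E n) := by rw [finrank_euclideanSpace_fin]; linarith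
  obtain ⟨B, hB⟩ := f.exists_norm_divergentBeam_le u hk
  refine locallyIntegrable_of_norm_le_rpow (C := B) ?_ hdim (.of_forall fun x => ?_)
    ((by fun_prop : Measurable fun x : E n => ‖x‖ ^ (-(k + 1))).aestronglyMeasurable.mul
      (f.stronglyMeasurable_divergentBeam_normalize u k).aestronglyMeasurable)
  · exact_mod_cast (show (0 : ℝ) < Module.finrank ℝ (E n) by linarith)
  rw [norm_mul, norm_of_nonneg (by positivity), mul_comm B]
  rcases eq_or_ne x 0 with rfl | hx
  · rw [norm_zero, zero_rpow (by linarith), zero_mul, zero_mul]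
  · exact mul_le_mul_of_nonneg_left (hB _ (by simp [norm_smul, hx])) (by positivity)
end
end

section
/- For Schwartz f on ℝⁿ, u ∈ ℝⁿ, β ∈ Sⁿ⁻¹, and a function h : ℝ → ℝ that is positively homogeneous of degree k − n + 1 (h(λt) = λ^{k-n+1} h(t) for λ > 0) and locally integrable, the following holds: ∫_{Sⁿ⁻¹} D_u^k f(σ) h(−σ·β) dσ = ∫_{ℝⁿ} f(x) h((u − x)·β) dx, where D_u^k f(σ) = ∫_0^∞ f(u+ρσ) ρ^k dρ and k ∈ ℤ, k ≥ 0. -/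
/-!
In polar coordinates `x = u + ρ • σ` the Jacobian is `ρ ^ (n - 1)`, and homogeneity gives
`h ((u - x) · β) = ρ ^ (k - n + 1) * h (-σ · β)`, so the radial integrand becomes
`f (u + ρ σ) ρ ^ k`. The degree `α = k - n + 1` is an integer. If `α ≤ -1`, then `h` is a
multiple of `t ^ α` on `(0, 1)` and of `(-t) ^ α` on `(-1, 0)`, which is not locally integrable
unless the multiple vanishes, so `h = 0` and both sides vanish. If `α = m ≥ 0`, then
`|h t| ≤ C |t| ^ m`, and the decay of `f` makes the integrand integrable, which justifies Fubini
in polar coordinates.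
-/

open MeasureTheory Real Set Metric
open scoped RealInnerProductSpace

noncomputable section

def IsPositivelyHomogeneous (h : ℝ → ℝ) (α : ℝ) : Prop :=
  ∀ l : ℝ, 0 < l → ∀ t : ℝ, h (l * t) = l ^ α * h t

namespace IsPositivelyHomogeneous

variable {h : ℝ → ℝ} {α : ℝ}

theorem comp_neg (hh : IsPositivelyHomogeneous h α) :
    IsPositivelyHomogeneous (fun t ↦ h (-t)) α := fun l hl t ↦ by
  simpa only [mul_neg] using hh l hl (-t)

theorem apply_of_pos (hh : IsPositivelyHomogeneous h α) {t : ℝ} (ht : 0 < t) :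
    h t = t ^ α * h 1 := by
  simpa only [mul_one] using hh t ht 1

theorem apply_of_neg (hh : IsPositivelyHomogeneous h α) {t : ℝ} (ht : t < 0) :
    h t = (-t) ^ α * h (-1) := by
  simpa only [neg_neg] using hh.comp_neg.apply_of_pos (neg_pos.2 ht)

theorem apply_zero (hh : IsPositivelyHomogeneous h α) (hα : α ≠ 0) : h 0 = 0 := by
  have h2 : h 0 = 2 ^ α * h 0 := by simpa only [mul_zero] using hh 2 two_pos 0
  have h2α : (2 : ℝ) ^ α ≠ 1 := by
    intro h1
    have := congrArg Real.log h1
    rw [Real.log_rpow two_pos, Real.log_one, mul_eq_zero] at this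
    exact this.elim hα (Real.log_pos one_lt_two).ne'
  have h2' : (2 ^ α - 1) * h 0 = 0 := by rw [sub_mul, one_mul, ← h2, sub_self]
  exact (mul_eq_zero.1 h2').resolve_left (sub_ne_zero.2 h2α)

theorem exists_abs_le (hh : IsPositivelyHomogeneous h α) (hα : 0 ≤ α) :
    ∃ C, ∀ t, |h t| ≤ C * |t| ^ α := by
  refine ⟨max (max |h 1| |h (-1)|) |h 0|, fun t ↦ ?_⟩
  rcases lt_trichotomy t 0 with ht | rfl | ht
  · rw [hh.apply_of_neg ht, abs_mul, abs_of_neg ht,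
      abs_of_pos (rpow_pos_of_pos (neg_pos.2 ht) _), mul_comm]
    exact mul_le_mul_of_nonneg_right ((le_max_right _ _).trans (le_max_left _ _))
      (rpow_nonneg (neg_nonneg.2 ht.le) _)
  · rcases hα.eq_or_lt with rfl | hα
    · simp
    · simp [hh.apply_zero hα.ne', zero_rpow hα.ne']
  · rw [hh.apply_of_pos ht, abs_mul, abs_of_pos ht, abs_of_pos (rpow_pos_of_pos ht _), mul_comm]
    exact mul_le_mul_of_nonneg_right ((le_max_left _ _).trans (le_max_left _ _)) (by positivity)

theorem apply_one_eq_zero_of_integrableOn (hh : IsPositivelyHomogeneous h α) (hα : α ≤ -1)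
    (hint : IntegrableOn h (Ioo 0 1)) : h 1 = 0 := by
  by_contra h1
  have : IntegrableOn (fun t : ℝ ↦ t ^ α) (Ioo 0 1) := by
    refine IntegrableOn.congr_fun (hint.mul_const (h 1)⁻¹) (fun t ht ↦ ?_) measurableSet_Ioo
    rw [hh.apply_of_pos ht.1, mul_inv_cancel_right₀ h1]
  exact (intervalIntegral.integrableOn_Ioo_rpow_iff one_pos).1 this |>.not_ge hα

theorem eq_zero_of_locallyIntegrable (hh : IsPositivelyHomogeneous h α) (hα : α ≤ -1)
    (hloc : LocallyIntegrable h) : h = 0 := by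
  have hIcc : IntegrableOn h (Icc (-1) 1) := hloc.integrableOn_isCompact isCompact_Icc
  have hpos : IntegrableOn h (Ioo 0 1) := hIcc.mono_set (Ioo_subset_Icc_self.trans <|
    Icc_subset_Icc (by norm_num) le_rfl)
  have hneg : IntegrableOn (fun t ↦ h (-t)) (Ioo 0 1) := by
    have := (Measure.measurePreserving_neg (volume : Measure ℝ)).integrableOn_comp_preimage
      (Homeomorph.neg ℝ).measurableEmbedding (f := h) (s := Ioo (-1) 0)
    simpa [Function.comp_def] using this.2 (hIcc.mono_set (Ioo_subset_Icc_self.trans <|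
      Icc_subset_Icc le_rfl zero_le_one))
  have h1 : h 1 = 0 := hh.apply_one_eq_zero_of_integrableOn hα hpos
  have hm1 : h (-1) = 0 := hh.comp_neg.apply_one_eq_zero_of_integrableOn hα hneg
  ext t
  rcases lt_trichotomy t 0 with ht | rfl | ht
  · simp [hh.apply_of_neg ht, hm1]
  · exact hh.apply_zero (by linarith)
  · simp [hh.apply_of_pos ht, h1]

theorem setIntegral_Ioi_pow_mul_mul_comp_mul {m : ℕ}
    (hh : IsPositivelyHomogeneous h m) (F : ℝ → ℝ) (j : ℕ) (c : ℝ) :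
    ∫ ρ in Ioi (0 : ℝ), ρ ^ j * (F ρ * h (ρ * c)) =
      (∫ ρ in Ioi (0 : ℝ), F ρ * ρ ^ (j + m)) * h c := by
  rw [← integral_mul_const]
  refine setIntegral_congr_fun measurableSet_Ioi fun ρ hρ ↦ ?_
  rw [hh ρ hρ, rpow_natCast, pow_add]
  ring

end IsPositivelyHomogeneous

theorem integral_eq_integral_toSphere_setIntegral_Ioi
    {V F : Type*} [NormedAddCommGroup V] [NormedSpace ℝ V] [FiniteDimensional ℝ V]
    [Nontrivial V] [MeasurableSpace V] [BorelSpace V] [NormedAddCommGroup F] [NormedSpace ℝ F]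
    (μ : Measure V) [μ.IsAddHaarMeasure] {g : V → F} (hg : Integrable g μ) :
    ∫ x, g x ∂μ = ∫ σ : sphere (0 : V) 1,
      (∫ ρ in Ioi (0 : ℝ), ρ ^ (Module.finrank ℝ V - 1) • g (ρ • (σ : V))) ∂μ.toSphere := by
  set ν := μ.toSphere.prod (Measure.volumeIoiPow (Module.finrank ℝ V - 1))
  have hμ : MeasurePreserving _ _ ν := μ.measurePreserving_homeomorphUnitSphereProd
  have hemb := (homeomorphUnitSphereProd V).measurableEmbedding
  set g' : sphere (0 : V) 1 × Ioi (0 : ℝ) → F := fun p ↦ g ((p.2 : ℝ) • (p.1 : V))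
  have hg'_comp : g' ∘ homeomorphUnitSphereProd V = g ∘ Subtype.val := by
    ext x
    simp [g', ← homeomorphUnitSphereProd_symm_apply_coe]
  have hg' : Integrable g' ν := by
    rw [← hμ.integrable_comp_emb hemb, hg'_comp,
      ← integrableOn_iff_comap_subtypeVal (measurableSet_singleton _).compl]
    exact hg.integrableOn
  calc ∫ x, g x ∂μ = ∫ x : ({0}ᶜ : Set V), g x ∂(μ.comap (↑)) := by
        rw [integral_subtype_comap (measurableSet_singleton _).compl, restrict_compl_singleton]
    _ = ∫ p, g' p ∂ν := by
        rw [← hμ.integral_comp hemb]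
        exact integral_congr_ae (.of_forall fun x ↦ (congrFun hg'_comp x).symm)
    _ = _ := by
        rw [integral_prod _ hg']
        refine integral_congr_ae (.of_forall fun σ ↦ ?_)
        simp only [g', Measure.volumeIoiPow, ENNReal.ofReal]
        rw [integral_withDensity_eq_integral_smul
            ((measurable_subtype_coe.pow_const _).real_toNNReal)]
        refine (integral_subtype_comap measurableSet_Ioi
          (fun ρ : ℝ ↦ (ρ ^ (Module.finrank ℝ V - 1)).toNNReal • g (ρ • (σ : V)))).trans ?_
        refine setIntegral_congr_fun measurableSet_Ioi fun ρ hρ ↦ ?_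
        rw [NNReal.smul_def, Real.coe_toNNReal _ (pow_nonneg (le_of_lt hρ) _)]

theorem SchwartzMap.integrable_mul_comp_neg_inner {V : Type*} [NormedAddCommGroup V]
    [InnerProductSpace ℝ V] [FiniteDimensional ℝ V] [MeasurableSpace V] [BorelSpace V]
    (μ : Measure V) [μ.IsAddHaarMeasure] (f : SchwartzMap V ℝ) (u β : V) {h : ℝ → ℝ}
    (hmeas : Measurable h) {C : ℝ} {m : ℕ} (hC : ∀ t, |h t| ≤ C * |t| ^ m) :
    Integrable (fun y ↦ f (u + y) * h (-⟪y, β⟫)) μ := by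
  have hC0 : 0 ≤ C := by simpa using (abs_nonneg _).trans (hC 1)
  have hdom := ((f.compSubConstCLM ℝ (-u)).integrable_pow_mul μ m).const_mul (C * ‖β‖ ^ m)
  refine hdom.mono' (Measurable.aestronglyMeasurable (by fun_prop)) (.of_forall fun y ↦ ?_)
  have hinner : |⟪y, β⟫| ^ m ≤ (‖y‖ * ‖β‖) ^ m := by
    gcongr
    exact abs_real_inner_le_norm y β
  calc ‖f (u + y) * h (-⟪y, β⟫)‖ ≤ ‖f (u + y)‖ * (C * |⟪y, β⟫| ^ m) := by
        rw [norm_mul, Real.norm_eq_abs (h _)]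
        exact mul_le_mul_of_nonneg_left (by simpa using hC (-⟪y, β⟫)) (norm_nonneg _)
    _ ≤ ‖f (u + y)‖ * (C * (‖y‖ * ‖β‖) ^ m) := by gcongr
    _ = C * ‖β‖ ^ m * (‖y‖ ^ m * ‖f (y - -u)‖) := by
        rw [sub_neg_eq_add, add_comm y]
        ring

theorem stmt9_general (n : ℕ) (hn : 2 ≤ n) (k : ℕ) (f : SchwartzMap (E n) ℝ) (u β : E n)
    (h : ℝ → ℝ) (hmeas : Measurable h) (hloc : LocallyIntegrable h volume)
    (hhom : ∀ l : ℝ, 0 < l → ∀ t : ℝ, h (l * t) = l ^ ((k : ℝ) - n + 1) * h t) :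
    ∫ σ : sphere (0 : E n) 1,
        (∫ ρ in Ioi (0 : ℝ), f (u + ρ • (σ : E n)) * ρ ^ k) * h (-⟪(σ : E n), β⟫)
        ∂(volume : Measure (E n)).toSphere
      = ∫ x : E n, f x * h ⟪u - x, β⟫ := by
  rcases le_or_gt ((k : ℝ) - n + 1) (-1) with hα | hα
  · simp [IsPositivelyHomogeneous.eq_zero_of_locallyIntegrable hhom hα hloc]
  have hnk : n ≤ k + 1 :=
    Nat.lt_succ_iff.1 (by exact_mod_cast (by linarith : (n : ℝ) < k + 1 + 1))
  have hm : (k : ℝ) - n + 1 = (k + 1 - n : ℕ) := by push_cast [Nat.cast_sub hnk]; ring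
  rw [hm] at hhom
  obtain ⟨C, hC⟩ := IsPositivelyHomogeneous.exists_abs_le hhom (Nat.cast_nonneg _)
  simp only [rpow_natCast] at hC
  have : Nontrivial (Fin n) := Fin.nontrivial_iff_two_le.2 hn
  rw [← integral_add_left_eq_self _ u]
  simp only [sub_add_cancel_left, inner_neg_left]
  rw [integral_eq_integral_toSphere_setIntegral_Ioi volume
    (f.integrable_mul_comp_neg_inner volume u β hmeas hC), finrank_euclideanSpace_fin]
  refine integral_congr_ae (.of_forall fun σ ↦ ?_)
  simp only [smul_eq_mul, real_inner_smul_left, ← mul_neg]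
  rw [IsPositivelyHomogeneous.setIntegral_Ioi_pow_mul_mul_comp_mul hhom,
    show n - 1 + (k + 1 - n) = k by omega]

/-- ∫_{S^{n-1}} D_u^k f(σ) h(-σ·β) dσ = ∫_{ℝⁿ} f(x) h((u-x)·β) dx for h positively
homogeneous of degree k - n + 1. -/
theorem stmt9 (n : ℕ) (hn : 2 ≤ n) (k : ℕ) (f : SchwartzMap (E n) ℝ) (u β : E n)
    (hβ : ‖β‖ = 1) (h : ℝ → ℝ) (hmeas : Measurable h) (hloc : LocallyIntegrable h volume)
    (hhom : ∀ l : ℝ, 0 < l → ∀ t : ℝ, h (l * t) = l ^ ((k : ℝ) - n + 1) * h t) :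
    ∫ σ : sphere (0 : E n) 1,
        (∫ ρ in Ioi (0 : ℝ), f (u + ρ • (σ : E n)) * ρ ^ k) * h (-⟪(σ : E n), β⟫)
        ∂(volume : Measure (E n)).toSphere
      = ∫ x : E n, f x * h ⟪u - x, β⟫ :=
  stmt9_general n hn k f u β h hmeas hloc hhom
end
end
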